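/- arXiv:2006.06087 — 3 statements merged into one kernel-verified Lean document; each statement's English description precedes it below -/
import Mathlib

section
/- Let β, δ, γ, k, μ̂ be real with β > 0, δ > 0, k ≥ 1, γ > 0. The function φ(ρ) = γβ − μ̂·ρ^(k²) + δ·ρ^(k(1+k)) on (0,∞) attains a strictly positive minimum if and only if μ̂ < μ̂_sn(γ), where μ̂_sn(γ) = ((1+k)δ/k)·(kβγ/δ)^(1/(k+1)); consequently φ has no zeros on (0,∞) for μ̂ < μ̂_sn(γ) (with μ̂ > 0). -/
/-!
Substituting `t = ρ ^ k` turns `φ` into `γβ - μ̂ t ^ k + δ t ^ (k + 1)`. Writing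
`μ̂ = (1 + k) δ c / k`, the weighted AM-GM inequality `(k + 1) c t ^ k ≤ c ^ (k + 1) + k t ^ (k + 1)`
shows `φ ≥ γβ - δ c ^ (k + 1) / k`, with equality at `t = c`. So the minimum of `φ` is attained
at `ρ_c = c ^ (1 / k)`, and it is positive iff `c ^ (k + 1) < kβγ / δ`, which is `μ̂ < μ̂_sn(γ)`.
-/

open Real

theorem Real.add_one_mul_mul_rpow_le {k c t : ℝ} (hk : 0 ≤ k) (hc : 0 ≤ c) (ht : 0 ≤ t) :
    (k + 1) * (c * t ^ k) ≤ c ^ (k + 1) + k * t ^ (k + 1) := by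
  have hk1 : 0 < k + 1 := by linarith
  have amgm := geom_mean_le_arith_mean2_weighted (inv_nonneg.2 hk1.le)
    (div_nonneg hk hk1.le) (rpow_nonneg hc (k + 1)) (rpow_nonneg ht (k + 1))
    (by field_simp; ring)
  rw [rpow_rpow_inv hc hk1.ne', ← rpow_mul ht, mul_div_cancel₀ k hk1.ne'] at amgm
  calc (k + 1) * (c * t ^ k)
      ≤ (k + 1) * ((k + 1)⁻¹ * c ^ (k + 1) + k / (k + 1) * t ^ (k + 1)) := by gcongr
    _ = c ^ (k + 1) + k * t ^ (k + 1) := by field_simp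

namespace SaddleNode

variable (β γ δ k μ : ℝ)

noncomputable def phi (ρ : ℝ) : ℝ := γ * β - μ * ρ ^ (k ^ 2) + δ * ρ ^ (k * (1 + k))

/-- The `c = ρ_c ^ k` of the argument above. -/
noncomputable def critPow : ℝ := k * μ / ((1 + k) * δ)

noncomputable def critRadius : ℝ := critPow δ k μ ^ k⁻¹

noncomputable def muSaddleNode : ℝ := (1 + k) * δ / k * (k * β * γ / δ) ^ ((1 : ℝ) / (k + 1))

variable {β γ δ k μ}

theorem phi_eq_of_rpow {ρ : ℝ} (hρ : 0 ≤ ρ) :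
    phi β γ δ k μ ρ = γ * β - μ * (ρ ^ k) ^ k + δ * (ρ ^ k) ^ (k + 1) := by
  rw [phi, ← rpow_mul hρ, ← rpow_mul hρ, sq, add_comm k 1]

theorem phi_critRadius (hk : 0 < k) (hδ : 0 < δ) (hμ : 0 < μ) :
    phi β γ δ k μ (critRadius δ k μ) = γ * β - δ * critPow δ k μ ^ (k + 1) / k := by
  have hc : 0 < critPow δ k μ := by unfold critPow; positivity
  rw [critRadius, phi_eq_of_rpow (rpow_nonneg hc.le _), rpow_inv_rpow hc.le hk.ne',
    rpow_add hc, rpow_one]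
  have hμc : μ = (1 + k) * δ * critPow δ k μ / k := by unfold critPow; field_simp
  nth_rw 1 [hμc]
  field_simp
  ring

theorem phi_critRadius_le (hk : 0 < k) (hδ : 0 < δ) (hμ : 0 < μ) {ρ : ℝ} (hρ : 0 ≤ ρ) :
    phi β γ δ k μ (critRadius δ k μ) ≤ phi β γ δ k μ ρ := by
  rw [phi_critRadius hk hδ hμ, phi_eq_of_rpow hρ]
  set c := critPow δ k μ
  have hc : 0 < c := by unfold c critPow; positivity
  have hμc : μ = (1 + k) * δ * c / k := by unfold c critPow; field_simp
  clear_value c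
  subst hμc
  have amgm := add_one_mul_mul_rpow_le hk.le hc.le (rpow_nonneg hρ k)
  rw [← sub_nonneg] at amgm ⊢
  have key : γ * β - (1 + k) * δ * c / k * (ρ ^ k) ^ k + δ * (ρ ^ k) ^ (k + 1)
      - (γ * β - δ * c ^ (k + 1) / k)
      = δ / k * (c ^ (k + 1) + k * (ρ ^ k) ^ (k + 1) - (k + 1) * (c * (ρ ^ k) ^ k)) := by
    field_simp
    ring
  rw [key]
  positivity

theorem phi_critRadius_pos_iff (hβ : 0 < β) (hγ : 0 < γ) (hk : 0 < k) (hδ : 0 < δ)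
    (hμ : 0 < μ) : 0 < phi β γ δ k μ (critRadius δ k μ) ↔ μ < muSaddleNode β γ δ k := by
  set c := critPow δ k μ
  have hc : 0 < c := by unfold c critPow; positivity
  have hμc : μ = (1 + k) * δ / k * c := by unfold c critPow; field_simp
  have hk1 : 0 < k + 1 := by linarith
  calc 0 < phi β γ δ k μ (critRadius δ k μ)
      ↔ c ^ (k + 1) < k * β * γ / δ := by
        rw [phi_critRadius hk hδ hμ, sub_pos, div_lt_iff₀ hk, lt_div_iff₀ hδ]
        constructor <;> intro h <;> linarith
    _ ↔ c < (k * β * γ / δ) ^ (k + 1)⁻¹ := (lt_rpow_inv_iff_of_pos hc.le (by positivity) hk1).symm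
    _ ↔ μ < muSaddleNode β γ δ k := by
        rw [muSaddleNode, hμc, one_div, mul_lt_mul_iff_right₀ (by positivity)]

end SaddleNode

open SaddleNode in
/-- Saddle-node curve: for `γ > 0` and `μ̂ > 0`, the function
`φ(ρ) = γβ − μ̂·ρ^(k²) + δ·ρ^(k(1+k))` attains a strictly positive minimum on `(0,∞)`
iff `μ̂ < μ̂_sn(γ) = ((1+k)δ/k)·(kβγ/δ)^(1/(k+1))`; consequently `φ` has no positive
zeros for `μ̂ < μ̂_sn(γ)`. -/
theorem stmt_2 (β δ γ k μhat : ℝ) (hβ : 0 < β) (hδ : 0 < δ) (hγ : 0 < γ) (hk : 1 ≤ k)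
    (hμ : 0 < μhat) :
    ((∃ ρc : ℝ, 0 < ρc ∧
        (∀ ρ : ℝ, 0 < ρ →
          γ * β - μhat * ρc ^ (k ^ 2) + δ * ρc ^ (k * (1 + k)) ≤
            γ * β - μhat * ρ ^ (k ^ 2) + δ * ρ ^ (k * (1 + k))) ∧
        0 < γ * β - μhat * ρc ^ (k ^ 2) + δ * ρc ^ (k * (1 + k))) ↔
      μhat < ((1 + k) * δ / k) * (k * β * γ / δ) ^ ((1 : ℝ) / (k + 1))) ∧
    (μhat < ((1 + k) * δ / k) * (k * β * γ / δ) ^ ((1 : ℝ) / (k + 1)) →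
      ∀ ρ : ℝ, 0 < ρ → γ * β - μhat * ρ ^ (k ^ 2) + δ * ρ ^ (k * (1 + k)) ≠ 0) := by
  have hk0 : 0 < k := by linarith
  have hmin {ρ : ℝ} (hρ : 0 < ρ) := phi_critRadius_le (β := β) (γ := γ) hk0 hδ hμ hρ.le
  have hpos := phi_critRadius_pos_iff hβ hγ hk0 hδ hμ
  have hρc : 0 < critRadius δ k μhat := by unfold critRadius critPow; positivity
  refine ⟨⟨fun ⟨_, _, hρcmin, hφ⟩ => hpos.1 (hφ.trans_le (hρcmin _ hρc)),
    fun h => ⟨_, hρc, fun ρ hρ => hmin hρ, hpos.2 h⟩⟩, fun h ρ hρ => ?_⟩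
  exact ((hpos.2 h).trans_le (hmin hρ)).ne'
end

section
/- Consider the planar system x₁' = ρ₁^(k(1+k))·((τ−γ)β + μ̂·ρ₁^(k²) + τ·x₁ − δ·ρ₁^(k(1+k))) + k·x₁·(β + x₁), ρ₁' = (1/k)·ρ₁·(β + x₁), with β > 0, τ > 0, δ > 0, k ≥ 1. If an equilibrium has x₁ = −β and trace of the Jacobian equal to zero, then ρ₁ = (kβ/τ)^(1/(k(1+k))), and substituting into the equilibrium equation yields μ̂ = ((kδ + τγ)/k)·(kβ/τ)^(1/(k+1)). -/
lemma eq_rpow_one_div_of_pow_eq {x c : ℝ} {n : ℕ} (hx : 0 ≤ x) (hn : n ≠ 0) (h : x ^ n = c) :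
    x = c ^ (1 / (n : ℝ)) := by
  rw [← h, one_div, Real.pow_rpow_inv_natCast hx hn]

/-- Applied with `r = ρ^(k²)`, `s = ρ^k`: multiplying by `s` turns `μ r` into `μ · kβ/τ`, and
then `β` cancels. -/
lemma eq_mul_of_mul_eq_of_mul_eq_div {k β τ δ γ μ r s : ℝ} (hk : k ≠ 0) (hβ : β ≠ 0)
    (hτ : τ ≠ 0) (hrs : r * s = k * β / τ) (hμ : μ * r = γ * β + δ * (k * β / τ)) :
    μ = (k * δ + τ * γ) / k * s := by
  have hc : k * β / τ ≠ 0 := by positivity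
  have key : μ * (k * β / τ) = (γ * β + δ * (k * β / τ)) * s := by
    rw [← hμ, ← hrs]; ring
  field_simp at key ⊢
  linear_combination key

theorem stmt_4_general (k : ℕ) (hk : 1 ≤ k) (β τ δ γ μhat ρ : ℝ)
    (hβ : 0 < β) (hτ : 0 < τ) (hρ : 0 < ρ)
    (heq : ρ ^ (k * (1 + k)) *
        ((τ - γ) * β + μhat * ρ ^ (k ^ 2) + τ * (-β) - δ * ρ ^ (k * (1 + k)))
        + (k : ℝ) * (-β) * (β + -β) = 0)
    (htr : -((k : ℝ) * β) + τ * ρ ^ (k * (1 + k)) = 0) :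
    ρ = ((k : ℝ) * β / τ) ^ ((1 : ℝ) / ((k : ℝ) * (1 + (k : ℝ)))) ∧
      μhat = (((k : ℝ) * δ + τ * γ) / (k : ℝ)) * ((k : ℝ) * β / τ) ^ ((1 : ℝ) / ((k : ℝ) + 1)) := by
  have hk0 : (k : ℝ) ≠ 0 := by exact_mod_cast (by omega : k ≠ 0)
  have hpow : ρ ^ (k * (1 + k)) = k * β / τ := by
    field_simp
    linarith
  have hbracket : μhat * ρ ^ (k ^ 2) = γ * β + δ * (k * β / τ) := by
    rw [add_neg_cancel, mul_zero, add_zero, hpow] at heq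
    have h := (mul_eq_zero.mp heq).resolve_left (by positivity)
    linarith
  have hroot : ρ ^ k = ((k : ℝ) * β / τ) ^ ((1 : ℝ) / ((k : ℝ) + 1)) := by
    have h := eq_rpow_one_div_of_pow_eq (pow_nonneg hρ.le k) k.succ_ne_zero
      (show (ρ ^ k) ^ (k + 1) = k * β / τ by rw [← pow_mul, ← hpow]; ring_nf)
    exact_mod_cast h
  refine ⟨by exact_mod_cast eq_rpow_one_div_of_pow_eq hρ.le (by positivity) hpow, ?_⟩
  rw [← hroot]
  refine eq_mul_of_mul_eq_of_mul_eq_div hk0 hβ.ne' hτ.ne' ?_ hbracket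
  rw [← pow_add, ← hpow]
  ring_nf

/-- If an equilibrium of the desingularised system has `x₁ = −β` and zero Jacobian trace,
then `ρ₁ = (kβ/τ)^(1/(k(1+k)))` and `μ̂ = ((kδ + τγ)/k)·(kβ/τ)^(1/(k+1))` (the Hopf value). -/
theorem stmt_4 (k : ℕ) (hk : 1 ≤ k) (β τ δ γ μhat ρ : ℝ)
    (hβ : 0 < β) (hτ : 0 < τ) (hδ : 0 < δ) (hρ : 0 < ρ)
    (heq : ρ ^ (k * (1 + k)) *
        ((τ - γ) * β + μhat * ρ ^ (k ^ 2) + τ * (-β) - δ * ρ ^ (k * (1 + k)))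
        + (k : ℝ) * (-β) * (β + -β) = 0)
    (htr : -((k : ℝ) * β) + τ * ρ ^ (k * (1 + k)) = 0) :
    ρ = ((k : ℝ) * β / τ) ^ ((1 : ℝ) / ((k : ℝ) * (1 + (k : ℝ)))) ∧
      μhat = (((k : ℝ) * δ + τ * γ) / (k : ℝ)) * ((k : ℝ) * β / τ) ^ ((1 : ℝ) / ((k : ℝ) + 1)) :=
  stmt_4_general k hk β τ δ γ μhat ρ hβ hτ hρ heq htr
end

section
/- With β > 0, τ > 0, δ > 0, k ≥ 1 and γ < δ/τ, the determinant of the Jacobian of the desingularised system at the Hopf equilibrium (x₁, ρ₁) = (−β, (kβ/τ)^(1/(k(1+k)))) with μ̂ = μ̂_ah(γ) equals (kβ/τ)²·(δ − γτ), which is strictly positive. -/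
/-!
Write `c = kβ/τ`, `N = k(1+k)`, so that `ρ^N = c` and `μ̂ ρ^(k²) = ((kδ+τγ)/k) c` at the Hopf point.
At `x = -β` the factor `β + x` vanishes, so `∂ᵣ f₂ = 0` and the determinant is `-∂ᵣ f₁ · ∂ₓ f₂`.
The choice of `μ̂_ah` makes the bracket multiplying `r^N` in `f₁(-β, ·)` vanish at `ρ`, so only
`ρ^N` times the derivative of that bracket survives in `∂ᵣ f₁`; the rest is algebra in `c`.
-/

theorem HasDerivAt.mul_of_right_eq_zero {𝕜 : Type*} [NontriviallyNormedField 𝕜] {f g : 𝕜 → 𝕜}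
    {f' g' x : 𝕜} (hf : HasDerivAt f f' x) (hg : HasDerivAt g g' x) (hgx : g x = 0) :
    HasDerivAt (fun y => f y * g y) (f x * g') x := by
  have h := hf.mul hg
  rwa [hgx, mul_zero, zero_add] at h

theorem Real.rpow_one_div_mul_one_add_pow {c : ℝ} (hc : 0 ≤ c) {k : ℕ} (hk : k ≠ 0) :
    (c ^ ((1 : ℝ) / (k * (1 + k)))) ^ (k * (1 + k)) = c := by
  have hexp : (1 : ℝ) / (k * (1 + k)) = ((k * (1 + k) : ℕ) : ℝ)⁻¹ := by push_cast; rw [one_div]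
  rw [hexp, Real.rpow_inv_natCast_pow hc (by positivity)]

theorem Real.rpow_one_div_add_one_mul_rpow_pow_sq {c : ℝ} (hc : 0 < c)
    {k : ℕ} (hk : k ≠ 0) :
    c ^ ((1 : ℝ) / (k + 1)) * (c ^ ((1 : ℝ) / (k * (1 + k)))) ^ (k ^ 2) = c := by
  have hk' : (k : ℝ) ≠ 0 := by exact_mod_cast hk
  rw [← Real.rpow_natCast, ← Real.rpow_mul hc.le, ← Real.rpow_add hc]
  convert Real.rpow_one c using 2
  push_cast
  field_simp
  ring

theorem stmt_5_general (k : ℕ) (hk : 1 ≤ k) (β τ δ γ : ℝ)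
    (hβ : 0 < β) (hτ : 0 < τ) (hγ : γ < δ / τ)
    (μah ρh : ℝ)
    (hμah : μah = (((k : ℝ) * δ + τ * γ) / (k : ℝ)) * ((k : ℝ) * β / τ) ^ ((1 : ℝ) / ((k : ℝ) + 1)))
    (hρh : ρh = ((k : ℝ) * β / τ) ^ ((1 : ℝ) / ((k : ℝ) * (1 + (k : ℝ)))))
    (f1 f2 : ℝ → ℝ → ℝ)
    (hf1 : f1 = fun x r =>
      r ^ (k * (1 + k)) * ((τ - γ) * β + μah * r ^ (k ^ 2) + τ * x - δ * r ^ (k * (1 + k)))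
        + (k : ℝ) * x * (β + x))
    (hf2 : f2 = fun x r => (1 / (k : ℝ)) * r * (β + x)) :
    deriv (fun x => f1 x ρh) (-β) * deriv (fun r => f2 (-β) r) ρh
        - deriv (fun r => f1 (-β) r) ρh * deriv (fun x => f2 x ρh) (-β)
      = ((k : ℝ) * β / τ) ^ 2 * (δ - γ * τ) ∧
    0 < ((k : ℝ) * β / τ) ^ 2 * (δ - γ * τ) := by
  set c := (k : ℝ) * β / τ with hc_def
  have hk0 : k ≠ 0 := by omega
  have hc : 0 < c := by positivity
  have hρN : ρh ^ (k * (1 + k)) = c := hρh ▸ Real.rpow_one_div_mul_one_add_pow hc.le hk0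
  have hμρ : μah * ρh ^ (k ^ 2) = (k * δ + τ * γ) / k * c := by
    rw [hμah, hρh, mul_assoc, Real.rpow_one_div_add_one_mul_rpow_pow_sq hc hk0]
  have hbracket :
      (τ - γ) * β + μah * ρh ^ (k ^ 2) + τ * (-β) - δ * ρh ^ (k * (1 + k)) = 0 := by
    rw [hμρ, hρN, hc_def]
    field_simp
    ring
  have hf1r : HasDerivAt (fun r => f1 (-β) r)
      (ρh ^ (k * (1 + k)) * (μah * (↑(k ^ 2) * ρh ^ (k ^ 2 - 1))
        - δ * (↑(k * (1 + k)) * ρh ^ (k * (1 + k) - 1)))) ρh := by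
    subst hf1
    exact ((hasDerivAt_pow _ ρh).mul_of_right_eq_zero
      ((((hasDerivAt_pow _ ρh).const_mul μah).const_add _).add_const _ |>.sub
        ((hasDerivAt_pow _ ρh).const_mul δ)) hbracket).add_const _
  have hf2r : deriv (fun r => f2 (-β) r) ρh = 0 := by simp [hf2]
  have hf2x : HasDerivAt (fun x => f2 x ρh) (ρh / k) (-β) := by
    subst hf2
    exact (((hasDerivAt_id' _).const_add β).const_mul (1 / (k : ℝ) * ρh)).congr_deriv (by ring)
  rw [hf1r.deriv, hf2r, hf2x.deriv]
  refine ⟨?_, mul_pos (pow_pos hc 2) (sub_pos.2 ((lt_div_iff₀ hτ).1 hγ))⟩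
  have hρN' : ρh * ρh ^ (k * (1 + k) - 1) = c := by rw [mul_pow_sub_one (by positivity), hρN]
  have hμρ' : μah * (ρh * ρh ^ (k ^ 2 - 1)) = (k * δ + τ * γ) / k * c := by
    rw [mul_pow_sub_one (by positivity), hμρ]
  push_cast
  rw [hρN]
  linear_combination (norm := (field_simp; ring)) (-(c / k) * k ^ 2) * hμρ' + (c / k * δ * k * (1 + k)) * hρN'

/-- The Jacobian determinant of the desingularised system at the Hopf equilibrium
`(x₁,ρ₁) = (−β, (kβ/τ)^(1/(k(1+k))))` with `μ̂ = μ̂_ah(γ)` equals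
`(kβ/τ)²·(δ − γτ) > 0` whenever `γ < δ/τ`. -/
theorem stmt_5 (k : ℕ) (hk : 1 ≤ k) (β τ δ γ : ℝ)
    (hβ : 0 < β) (hτ : 0 < τ) (hδ : 0 < δ) (hγ : γ < δ / τ)
    (μah ρh : ℝ)
    (hμah : μah = (((k : ℝ) * δ + τ * γ) / (k : ℝ)) * ((k : ℝ) * β / τ) ^ ((1 : ℝ) / ((k : ℝ) + 1)))
    (hρh : ρh = ((k : ℝ) * β / τ) ^ ((1 : ℝ) / ((k : ℝ) * (1 + (k : ℝ)))))
    (f1 f2 : ℝ → ℝ → ℝ)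
    (hf1 : f1 = fun x r =>
      r ^ (k * (1 + k)) * ((τ - γ) * β + μah * r ^ (k ^ 2) + τ * x - δ * r ^ (k * (1 + k)))
        + (k : ℝ) * x * (β + x))
    (hf2 : f2 = fun x r => (1 / (k : ℝ)) * r * (β + x)) :
    deriv (fun x => f1 x ρh) (-β) * deriv (fun r => f2 (-β) r) ρh
        - deriv (fun r => f1 (-β) r) ρh * deriv (fun x => f2 x ρh) (-β)
      = ((k : ℝ) * β / τ) ^ 2 * (δ - γ * τ) ∧
    0 < ((k : ℝ) * β / τ) ^ 2 * (δ - γ * τ) :=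
  stmt_5_general k hk β τ δ γ hβ hτ hγ μah ρh hμah hρh f1 f2 hf1 hf2
end
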